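/- For all rationals r₁, r₂ and every natural number N, the product of partial exponential sums satisfies (∑_{i=0}^{N} r₁^i/i!)·(∑_{j=0}^{N} r₂^j/j!) = ∑_{k=0}^{N} (r₁+r₂)^k/k! + U, where |U| ≤ ∑_{k=N+1}^{2N} (|r₁|+|r₂|)^k/k!. -/

import Mathlib

/-!
Multiplying out the two truncated series gives the sum of `r₁ ^ i / i! * r₂ ^ j / j!` over the box
`i, j ≤ N`. Grouping the terms by `k = i + j`, the binomial theorem turns each full antidiagonal
into `(r₁ + r₂) ^ k / k!`; the antidiagonals with `k ≤ N` lie entirely in the box, and the rest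
of the box, `U`, lies on the antidiagonals `N < k ≤ 2N`, where it is bounded termwise by the
full antidiagonal sums for `|r₁|` and `|r₂|`.
-/

open Finset
open scoped Nat

section Antidiagonal

variable {M : Type*} {s : Finset (ℕ × ℕ)} {t : Finset ℕ}

lemma sum_eq_sum_sum_antidiagonal_filter [AddCommMonoid M] (h : ∀ p ∈ s, p.1 + p.2 ∈ t)
    (f : ℕ × ℕ → M) : ∑ p ∈ s, f p = ∑ k ∈ t, ∑ p ∈ antidiagonal k with p ∈ s, f p := by
  rw [← sum_fiberwise_of_maps_to h]
  refine sum_congr rfl fun k _ => sum_congr ?_ fun _ _ => rfl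
  ext p
  simp [HasAntidiagonal.mem_antidiagonal, and_comm]

lemma sum_eq_sum_sum_antidiagonal [AddCommMonoid M] (h : ∀ p ∈ s, p.1 + p.2 ∈ t)
    (hst : ∀ k ∈ t, antidiagonal k ⊆ s) (f : ℕ × ℕ → M) :
    ∑ p ∈ s, f p = ∑ k ∈ t, ∑ p ∈ antidiagonal k, f p := by
  rw [sum_eq_sum_sum_antidiagonal_filter h]
  exact sum_congr rfl fun k hk => by rw [filter_true_of_mem (hst k hk)]

lemma sum_le_sum_sum_antidiagonal [AddCommMonoid M] [PartialOrder M] [IsOrderedAddMonoid M]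
    (h : ∀ p ∈ s, p.1 + p.2 ∈ t) {f : ℕ × ℕ → M} (hf : ∀ p, 0 ≤ f p) :
    ∑ p ∈ s, f p ≤ ∑ k ∈ t, ∑ p ∈ antidiagonal k, f p := by
  rw [sum_eq_sum_sum_antidiagonal_filter h]
  exact sum_le_sum fun k _ =>
    sum_le_sum_of_subset_of_nonneg (filter_subset _ _) fun p _ _ => hf p

end Antidiagonal

section TruncatedCauchyProduct

variable {R : Type*}

lemma sum_range_mul_sum_range [CommSemiring R] (f g : ℕ → R) (N : ℕ) :
    (∑ i ∈ range (N + 1), f i) * ∑ j ∈ range (N + 1), g j =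
      ∑ k ∈ range (N + 1), ∑ p ∈ antidiagonal k, f p.1 * g p.2 +
        ∑ p ∈ range (N + 1) ×ˢ range (N + 1) with N < p.1 + p.2, f p.1 * g p.2 := by
  rw [sum_mul_sum, ← sum_product', ← sum_filter_not_add_sum_filter _ (fun p => N < p.1 + p.2)]
  congr 1
  refine sum_eq_sum_sum_antidiagonal (fun p hp => ?_) (fun k hk p hp => ?_) _
  · simp only [mem_filter, not_lt] at hp
    simpa [Nat.lt_succ_iff] using hp.2
  · simp only [mem_range, HasAntidiagonal.mem_antidiagonal] at hk hp
    simp only [mem_filter, mem_product, mem_range, not_lt]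
    omega

lemma abs_sum_tail_le [CommRing R] [LinearOrder R] [IsStrictOrderedRing R] (f g : ℕ → R)
    (N : ℕ) :
    |∑ p ∈ range (N + 1) ×ˢ range (N + 1) with N < p.1 + p.2, f p.1 * g p.2| ≤
      ∑ k ∈ Icc (N + 1) (2 * N), ∑ p ∈ antidiagonal k, |f p.1| * |g p.2| := by
  have h_maps : ∀ p ∈ {p ∈ range (N + 1) ×ˢ range (N + 1) | N < p.1 + p.2},
      p.1 + p.2 ∈ Icc (N + 1) (2 * N) := by
    intro p hp
    simp only [mem_filter, mem_product, mem_range] at hp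
    simp only [mem_Icc]
    omega
  calc _ ≤ ∑ p ∈ range (N + 1) ×ˢ range (N + 1) with N < p.1 + p.2, |f p.1| * |g p.2| := by
        simpa only [abs_mul] using abs_sum_le_sum_abs (fun p : ℕ × ℕ => f p.1 * g p.2) _
    _ ≤ _ := sum_le_sum_sum_antidiagonal h_maps fun p => by positivity

end TruncatedCauchyProduct

lemma sum_antidiagonal_pow_div_factorial {K : Type*} [Field K] [CharZero K] (x y : K) (k : ℕ) :
    ∑ p ∈ antidiagonal k, x ^ p.1 / (p.1 ! : K) * (y ^ p.2 / (p.2 ! : K)) = (x + y) ^ k / k ! := by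
  rw [(Commute.all x y).add_pow', sum_div]
  refine sum_congr rfl fun p hp => ?_
  rw [HasAntidiagonal.mem_antidiagonal] at hp
  subst hp
  have : ((p.1 + p.2)! : K) ≠ 0 := Nat.cast_ne_zero.mpr (Nat.factorial_ne_zero _)
  rw [nsmul_eq_mul, Nat.cast_add_choose]
  field_simp

theorem exp_partial_sum_mul (r₁ r₂ : ℚ) (N : ℕ) :
    ∃ U : ℚ,
      (∑ i ∈ Finset.range (N + 1), r₁ ^ i / (Nat.factorial i : ℚ)) *
          (∑ j ∈ Finset.range (N + 1), r₂ ^ j / (Nat.factorial j : ℚ))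
        = (∑ k ∈ Finset.range (N + 1), (r₁ + r₂) ^ k / (Nat.factorial k : ℚ)) + U ∧
      |U| ≤ ∑ k ∈ Finset.Icc (N + 1) (2 * N), (|r₁| + |r₂|) ^ k / (Nat.factorial k : ℚ) := by
  refine ⟨∑ p ∈ range (N + 1) ×ˢ range (N + 1) with N < p.1 + p.2,
      r₁ ^ p.1 / (p.1 ! : ℚ) * (r₂ ^ p.2 / (p.2 ! : ℚ)), ?_, ?_⟩
  · rw [sum_range_mul_sum_range (fun i => r₁ ^ i / (i ! : ℚ)) (fun j => r₂ ^ j / (j ! : ℚ))]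
    simp only [sum_antidiagonal_pow_div_factorial]
  · simpa only [abs_div, abs_pow, Nat.abs_cast, sum_antidiagonal_pow_div_factorial] using
      abs_sum_tail_le (fun i => r₁ ^ i / (i ! : ℚ)) (fun j => r₂ ^ j / (j ! : ℚ)) N
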